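/- arXiv:2209.03835 — 3 statements merged into one kernel-verified Lean document; each statement's English description precedes it below -/
import Mathlib

section
/- Let Σ be a real symmetric positive definite p×p matrix and K a real skew-symmetric p×p matrix, and set M = KΣ^{-1}. If for all pairs of distinct indices i ≠ j the entries of M satisfy m_{ij} ≠ 0 implies m_{ji} = 0 (i.e., M is supported over a simple graph), then M = 0. -/
open Matrix MeasureTheory

/-- A real square matrix is *stable* if every eigenvalue (over `ℂ`) has strictly
negative real part. -/
def IsStableMat {n : Type*} [Fintype n] [DecidableEq n] (M : Matrix n n ℝ) : Prop :=
  ∀ μ ∈ spectrum ℂ (M.map (algebraMap ℝ ℂ)), μ.re < 0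

/-- `M ∈ ℝ^E`: the matrix `M` is supported on the directed graph with edge set `E`,
i.e. `M j i = 0` whenever `(i, j) ∉ E`. -/
def InSupp {n : Type*} (E : Set (n × n)) (M : Matrix n n ℝ) : Prop :=
  ∀ i j : n, (i, j) ∉ E → M j i = 0

/-- The graphical continuous Lyapunov model `M_{G,C}`: positive definite matrices `S`
such that `M * S + S * Mᵀ + C = 0` for some `M ∈ ℝ^E`. -/
def LyapModel {n : Type*} [Fintype n] [DecidableEq n] (E : Set (n × n))
    (C : Matrix n n ℝ) : Set (Matrix n n ℝ) :=
  {S | S.PosDef ∧ ∃ M : Matrix n n ℝ, InSupp E M ∧ M * S + S * Mᵀ + C = 0}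

/-- Global identifiability: no two stable matrices supported on `E` yield the same
solution of the Lyapunov equation.  (Since for stable `M` the Lyapunov equation has a
unique positive definite solution `Σ(M,C)`, this is equivalent to every fiber
`F_{G,C}(M₀)` being the singleton `{M₀}`.) -/
def GloballyIdentifiable {n : Type*} [Fintype n] [DecidableEq n] (E : Set (n × n))
    (C : Matrix n n ℝ) : Prop :=
  ∀ M₁ M₂ : Matrix n n ℝ,
    InSupp E M₁ → IsStableMat M₁ → InSupp E M₂ → IsStableMat M₂ →
    ∀ S : Matrix n n ℝ, S.PosDef →
      M₁ * S + S * M₁ᵀ + C = 0 → M₂ * S + S * M₂ᵀ + C = 0 → M₁ = M₂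

/-- A directed graph is *simple* if it has no 2-cycles between distinct nodes. -/
def IsSimpleDigraph {n : Type*} (E : Set (n × n)) : Prop :=
  ∀ i j : n, i ≠ j → (i, j) ∈ E → (j, i) ∉ E

/-- The fiber `F_{G,C}(M₀)`: all stable matrices supported on `E` whose Lyapunov
solution coincides with that of `M₀`, i.e. some positive definite `S` solves the
Lyapunov equation for both `M₀` and `M`. -/
def Fiber {n : Type*} [Fintype n] [DecidableEq n] (E : Set (n × n))
    (C M₀ : Matrix n n ℝ) : Set (Matrix n n ℝ) :=
  {M | InSupp E M ∧ IsStableMat M ∧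
    ∃ S : Matrix n n ℝ, S.PosDef ∧ M₀ * S + S * M₀ᵀ + C = 0 ∧ M * S + S * Mᵀ + C = 0}

/-- The identification of the coordinate space `ℝ^{|E|}` with the matrices in `ℝ^E`:
the coordinate attached to an edge `(i,j)` is the entry `M j i`. -/
def edgeMatrix {p : ℕ} (E : Finset (Fin p × Fin p)) (f : E → ℝ) :
    Matrix (Fin p) (Fin p) ℝ :=
  fun j i => if h : (i, j) ∈ E then f ⟨(i, j), h⟩ else 0

/-- Generic identifiability: the set of parameter vectors `f ∈ ℝ^{|E|}` whose matrix
is stable but whose fiber is not a singleton is a Lebesgue null set. -/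
def GenericallyIdentifiable {p : ℕ} (E : Finset (Fin p × Fin p))
    (C : Matrix (Fin p) (Fin p) ℝ) : Prop :=
  volume {f : E → ℝ | IsStableMat (edgeMatrix E f) ∧
    Fiber (E : Set (Fin p × Fin p)) C (edgeMatrix E f) ≠ {edgeMatrix E f}} = 0

/-!
Write `Σ⁻¹ = Aᵀ A`. Simplicity of the support kills every off-diagonal product `m_ij m_ji`,
so `tr(M²) = ∑ m_ii² ≥ 0`. On the other hand skew-symmetry of `K` gives
`tr(M²) = -tr(K Σ⁻¹ Kᵀ Σ⁻¹) = -‖A K Aᵀ‖²_F ≤ 0`. Hence `A K Aᵀ = 0`, and `K = 0` because `A` is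
invertible.
-/

namespace Matrix

variable {n : Type*} [Fintype n]

lemma trace_mul_self_eq_sum_sq_diag {R : Type*} [Semiring R] (M : Matrix n n R)
    (h : ∀ i j, i ≠ j → M i j * M j i = 0) : (M * M).trace = ∑ i, M i i ^ 2 := by
  refine Finset.sum_congr rfl fun i _ => ?_
  rw [diag_apply, mul_apply, Finset.sum_eq_single i (fun j _ hji => h i j hji.symm)
    (fun hi => absurd (Finset.mem_univ i) hi), sq]

lemma trace_mul_mul_conjTranspose_mul_star_mul_self {R : Type*} [CommSemiring R] [StarRing R]
    (A K : Matrix n n R) :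
    (K * (Aᴴ * A) * Kᴴ * (Aᴴ * A)).trace = (A * K * Aᴴ * (A * K * Aᴴ)ᴴ).trace :=
  calc (K * (Aᴴ * A) * Kᴴ * (Aᴴ * A)).trace = ((K * Aᴴ * A * Kᴴ * Aᴴ) * A).trace := by
        simp only [Matrix.mul_assoc]
    _ = (A * (K * Aᴴ * A * Kᴴ * Aᴴ)).trace := trace_mul_comm _ _
    _ = (A * K * Aᴴ * (A * K * Aᴴ)ᴴ).trace := by
        simp only [conjTranspose_mul, conjTranspose_conjTranspose, Matrix.mul_assoc]

variable [DecidableEq n] {𝕜 : Type*} [RCLike 𝕜] {P : Matrix n n 𝕜}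

open scoped ComplexOrder MatrixOrder

lemma PosSemidef.trace_mul_mul_conjTranspose_mul_nonneg (hP : P.PosSemidef) (K : Matrix n n 𝕜) :
    0 ≤ (K * P * Kᴴ * P).trace := by
  obtain ⟨A, rfl⟩ := CStarAlgebra.nonneg_iff_eq_star_mul_self.mp hP.nonneg
  rw [star_eq_conjTranspose, trace_mul_mul_conjTranspose_mul_star_mul_self]
  exact (posSemidef_self_mul_conjTranspose _).trace_nonneg

lemma PosDef.trace_mul_mul_conjTranspose_mul_eq_zero_iff (hP : P.PosDef) {K : Matrix n n 𝕜} :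
    (K * P * Kᴴ * P).trace = 0 ↔ K = 0 := by
  refine ⟨fun hK => ?_, fun hK => by simp [hK]⟩
  obtain ⟨A, hA⟩ := CStarAlgebra.nonneg_iff_eq_star_mul_self.mp hP.posSemidef.nonneg
  rw [star_eq_conjTranspose] at hA
  rw [hA, trace_mul_mul_conjTranspose_mul_star_mul_self,
    trace_mul_conjTranspose_self_eq_zero_iff] at hK
  have hPKP : P * K * P = 0 := by
    rw [hA, show Aᴴ * A * K * (Aᴴ * A) = Aᴴ * (A * K * Aᴴ) * A by simp only [Matrix.mul_assoc],
      hK, Matrix.mul_zero, Matrix.zero_mul]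
  rwa [hP.isUnit.mul_left_eq_zero, hP.isUnit.mul_right_eq_zero] at hPKP

end Matrix

/-- if `M = K * Σ⁻¹` with `K` skew-symmetric and `Σ` positive definite,
and `M` is supported over a simple graph (for distinct `i ≠ j`, `M i j ≠ 0` implies
`M j i = 0`), then `M = 0`. -/
theorem skew_times_posdef_inv_simple_support_eq_zero {p : ℕ}
    (S K M : Matrix (Fin p) (Fin p) ℝ) (hS : S.PosDef) (hK : Kᵀ = -K)
    (hM : M = K * S⁻¹)
    (hsupp : ∀ i j : Fin p, i ≠ j → M i j ≠ 0 → M j i = 0) :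
    M = 0 := by
  have hMM : M * M = -(K * S⁻¹ * Kᴴ * S⁻¹) := by
    rw [hM, conjTranspose_eq_transpose_of_trivial, hK]
    noncomm_ring
  have htrace_nonneg : 0 ≤ (M * M).trace := by
    rw [trace_mul_self_eq_sum_sq_diag M fun i j hij => by
      by_cases hij' : M i j = 0 <;> simp [hij', hsupp i j hij]]
    positivity
  have hK0 : K = 0 := by
    rw [← hS.inv.trace_mul_mul_conjTranspose_mul_eq_zero_iff]
    refine le_antisymm ?_ (hS.inv.posSemidef.trace_mul_mul_conjTranspose_mul_nonneg K)
    rwa [hMM, trace_neg, neg_nonneg] at htrace_nonneg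
  rw [hM, hK0, Matrix.zero_mul]
end

section
/- Let G=(V,E) be a directed acyclic graph on V=[p] containing all self-loops (i.e., the edge relation restricted to pairs of distinct vertices contains no directed cycle). Then for every symmetric positive definite p×p matrix C, the graphical continuous Lyapunov model M_{G,C} is globally identifiable. -/
/-!
If `M₁` and `M₂` both solve the Lyapunov equation for the same symmetric `Σ`, then
`Δ = M₁ - M₂` makes `Δ Σ` skew-symmetric. Processing the nodes of the DAG in topological
order, assume every row of `Δ` indexed by a parent of `k` vanishes. Then
`(ΔΣ)_{kj} = -(ΔΣ)_{jk} = 0` for each `j` in the support of row `k` of `Δ`, so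
`Δ_k Σ Δ_kᵀ = ∑_j (ΔΣ)_{kj} Δ_{kj} = 0`, and positive definiteness of `Σ` forces `Δ_k = 0`.
-/

open Matrix MeasureTheory

theorem InSupp.sub {n : Type*} {E : Set (n × n)} {M₁ M₂ : Matrix n n ℝ}
    (h₁ : InSupp E M₁) (h₂ : InSupp E M₂) : InSupp E (M₁ - M₂) := fun i j hij => by
  rw [Matrix.sub_apply, h₁ i j hij, h₂ i j hij, sub_zero]

theorem transpose_sub_mul_eq_neg_of_lyapunov {n R : Type*} [Fintype n] [CommRing R]
    {M₁ M₂ S C : Matrix n n R} (hS : Sᵀ = S)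
    (e₁ : M₁ * S + S * M₁ᵀ + C = 0) (e₂ : M₂ * S + S * M₂ᵀ + C = 0) :
    ((M₁ - M₂) * S)ᵀ = -((M₁ - M₂) * S) := by
  rw [transpose_mul, hS]
  refine eq_neg_of_add_eq_zero_left ?_
  calc S * (M₁ - M₂)ᵀ + (M₁ - M₂) * S
      = (M₁ * S + S * M₁ᵀ + C) - (M₂ * S + S * M₂ᵀ + C) := by
        rw [transpose_sub, mul_sub, sub_mul]; abel
    _ = 0 := by rw [e₁, e₂, sub_zero]

section SkewProduct

variable {n : Type*} [Fintype n] {D S : Matrix n n ℝ}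

theorem row_eq_zero_of_mul_posDef_skew (hS : S.PosDef) (hskew : (D * S)ᵀ = -(D * S)) (k : n)
    (hrows : ∀ j, j ≠ k → D k j ≠ 0 → D j = 0) : D k = 0 := by
  have hskew_apply : ∀ i j, (D * S) j i = -(D * S) i j := fun i j => by
    simpa using congrFun (congrFun hskew i) j
  have hterm : ∀ j, (D * S) k j * D k j = 0 := fun j => by
    by_cases hD : D k j = 0
    · rw [hD, mul_zero]
    by_cases hjk : j = k
    · subst hjk
      have := hskew_apply j j
      rw [show (D * S) j j = 0 by linarith, zero_mul]
    · have hrow : (D * S) j = 0 := by rw [mul_apply_eq_vecMul, hrows j hjk hD, zero_vecMul]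
      rw [hskew_apply j k, hrow, Pi.zero_apply, neg_zero, zero_mul]
  by_contra hne
  have hpos := hS.dotProduct_mulVec_pos hne
  rw [star_trivial, dotProduct_mulVec, ← mul_apply_eq_vecMul, dotProduct,
    Finset.sum_eq_zero fun j _ => hterm j] at hpos
  exact lt_irrefl 0 hpos

theorem eq_zero_of_mul_posDef_skew {r : n → n → Prop} (hr : WellFounded r) (hS : S.PosDef)
    (hskew : (D * S)ᵀ = -(D * S)) (hD : ∀ j k, j ≠ k → D k j ≠ 0 → r j k) : D = 0 :=
  funext fun k => hr.induction k fun k ih =>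
    row_eq_zero_of_mul_posDef_skew hS hskew k fun j hjk hne => ih j (hD j k hjk hne)

end SkewProduct

theorem Finite.wellFounded_transGen_of_acyclic {α : Type*} [Finite α] {r : α → α → Prop}
    (hacyc : ∀ a, ¬ Relation.TransGen r a a) : WellFounded (Relation.TransGen r) :=
  haveI : IsTrans α (Relation.TransGen r) := ⟨fun _ _ _ => Relation.TransGen.trans⟩
  haveI : Std.Irrefl (Relation.TransGen r) := ⟨hacyc⟩
  Finite.wellFounded_of_trans_of_irrefl _

theorem dag_globally_identifiable_general {p : ℕ}
    (E : Set (Fin p × Fin p))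
    (hacyc : ∀ i : Fin p,
      ¬ Relation.TransGen (fun a b : Fin p => (a, b) ∈ E ∧ a ≠ b) i i)
    (C : Matrix (Fin p) (Fin p) ℝ) :
    GloballyIdentifiable E C := by
  intro M₁ M₂ h₁ _ h₂ _ S hS e₁ e₂
  have hSsymm : Sᵀ = S := by
    rw [← conjTranspose_eq_transpose_of_trivial]; exact hS.isHermitian
  have hskew := transpose_sub_mul_eq_neg_of_lyapunov hSsymm e₁ e₂
  have hsupp : ∀ j k, j ≠ k → (M₁ - M₂) k j ≠ 0 →
      Relation.TransGen (fun a b : Fin p => (a, b) ∈ E ∧ a ≠ b) j k :=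
    fun j k hjk hne => .single ⟨not_not.mp fun hE => hne ((h₁.sub h₂) j k hE), hjk⟩
  exact sub_eq_zero.mp <| eq_zero_of_mul_posDef_skew
    (Finite.wellFounded_transGen_of_acyclic hacyc) hS hskew hsupp

/-- directed acyclic graphs (with all self-loops) give globally
identifiable models for every symmetric positive definite `C`. -/
theorem dag_globally_identifiable {p : ℕ}
    (E : Set (Fin p × Fin p)) (hloops : ∀ i : Fin p, (i, i) ∈ E)
    (hacyc : ∀ i : Fin p,
      ¬ Relation.TransGen (fun a b : Fin p => (a, b) ∈ E ∧ a ≠ b) i i)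
    (C : Matrix (Fin p) (Fin p) ℝ) (hC : C.PosDef) :
    GloballyIdentifiable E C :=
  dag_globally_identifiable_general E hacyc C
end

section
/- Let G=(V,E) be a complete simple directed graph on V=[p] containing all self-loops, i.e., for every pair of distinct nodes i,j exactly one of the edges (i,j), (j,i) belongs to E. Then for every symmetric positive definite p×p matrix C, the graphical continuous Lyapunov model satisfies M_{G,C} = PD_p, the set of all symmetric positive definite p×p matrices. -/
open Matrix MeasureTheory

/-!
For positive definite `S`, the linear map `M ↦ M S + S Mᵀ` sends `ℝ^E` to the symmetric
matrices, and for a complete simple graph with loops both spaces have dimension `p (p + 1) / 2`;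
it therefore suffices to show injectivity. If `M S + S Mᵀ = 0`, write `S = B Bᵀ`; then
`X = B⁻¹ M B` is skew-symmetric, so `tr (M²) = tr (X²) = -‖X‖² ≤ 0`. On the other hand,
a simple graph has no 2-cycles, so `tr (M²) = ∑ Mᵢᵢ² ≥ 0`. Hence `X = 0` and `M = 0`.
-/

namespace Matrix

variable {n : Type*}

def supportedOn (E : Set (n × n)) : Submodule ℝ (Matrix n n ℝ) where
  carrier := {M | InSupp E M}
  add_mem' hA hB i j h := by simp [hA i j h, hB i j h]
  zero_mem' _ _ _ := rfl
  smul_mem' c A hA i j h := by simp [hA i j h]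

open Classical in
noncomputable def restrictSupp (E : Set (n × n)) : Matrix n n ℝ →ₗ[ℝ] supportedOn E where
  toFun A := ⟨of fun j i => if (i, j) ∈ E then A j i else 0, fun i j h => by simp [h]⟩
  map_add' A B := by ext j i; by_cases h : (i, j) ∈ E <;> simp [h]
  map_smul' c A := by ext j i; by_cases h : (i, j) ∈ E <;> simp [h]

theorem eq_zero_of_isSymm_of_restrictSupp_eq_zero {E : Set (n × n)}
    (htot : ∀ i j, (i, j) ∈ E ∨ (j, i) ∈ E) {A : Matrix n n ℝ} (hA : A.IsSymm)
    (h : restrictSupp E A = 0) : A = 0 := by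
  have hE : ∀ i j, (i, j) ∈ E → A j i = 0 := fun i j hij => by
    simpa [restrictSupp, hij] using congr_arg (fun M : supportedOn E => (M : Matrix n n ℝ) j i) h
  ext i j
  rcases htot j i with hji | hij
  · exact hE j i hji
  · rw [← hA.apply i j]
    exact hE i j hij

variable [Fintype n]

theorem trace_mul_self_eq_sum_diag_sq {E : Set (n × n)} (hE : IsSimpleDigraph E)
    {M : Matrix n n ℝ} (hM : InSupp E M) : (M * M).trace = ∑ i, M i i ^ 2 := by
  refine Finset.sum_congr rfl fun i _ => ?_
  rw [diag_apply, mul_apply, sq]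
  refine Finset.sum_eq_single i (fun j _ hji => ?_) (by simp)
  by_cases hij : (i, j) ∈ E
  · rw [hM j i (hE i j hji.symm hij), zero_mul]
  · rw [hM i j hij, mul_zero]

theorem eq_zero_of_transpose_eq_neg_of_trace_mul_self_nonneg {X : Matrix n n ℝ}
    (hX : Xᵀ = -X) (htr : 0 ≤ (X * X).trace) : X = 0 := by
  have hneg : (Xᴴ * X).trace = -(X * X).trace := by
    rw [conjTranspose_eq_transpose_of_trivial, hX, neg_mul, trace_neg]
  have hnonneg := (posSemidef_conjTranspose_mul_self X).trace_nonneg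
  exact trace_conjTranspose_mul_self_eq_zero_iff.mp (by linarith)

open scoped MatrixOrder in
theorem PosDef.exists_eq_mul_transpose_self [DecidableEq n] {S : Matrix n n ℝ}
    (hS : S.PosDef) : ∃ B : Matrix n n ℝ, IsUnit B ∧ S = B * Bᵀ := by
  obtain ⟨B, rfl⟩ := CStarAlgebra.nonneg_iff_eq_mul_star_self.mp hS.posSemidef.nonneg
  refine ⟨B, ?_, by rw [star_eq_conjTranspose, conjTranspose_eq_transpose_of_trivial]⟩
  exact isUnit_of_mul_isUnit_left hS.isUnit

theorem eq_zero_of_mul_add_mul_transpose_eq_zero [DecidableEq n] {E : Set (n × n)}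
    (hE : IsSimpleDigraph E) {M S : Matrix n n ℝ} (hM : InSupp E M) (hS : S.PosDef)
    (h : M * S + S * Mᵀ = 0) : M = 0 := by
  obtain ⟨B, hB, rfl⟩ := hS.exists_eq_mul_transpose_self
  have hdet : IsUnit B.det := (isUnit_iff_isUnit_det B).mp hB
  have hdetT : IsUnit Bᵀ.det := by rwa [det_transpose]
  set X := B⁻¹ * M * B with hXdef
  have hMX : M = B * X * B⁻¹ := by
    simp only [hXdef, mul_assoc, mul_nonsing_inv_cancel_left _ _ hdet,
      mul_nonsing_inv _ hdet, mul_one]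
  have hX : Xᵀ = -X := by
    have hsum : B⁻¹ * (M * (B * Bᵀ) + B * Bᵀ * Mᵀ) * (Bᵀ)⁻¹ = X + Xᵀ := by
      simp only [hXdef, transpose_mul, transpose_nonsing_inv, mul_add, add_mul, mul_assoc,
        mul_nonsing_inv _ hdetT, nonsing_inv_mul_cancel_left _ _ hdet, mul_one]
    rw [h, mul_zero, zero_mul] at hsum
    exact eq_neg_of_add_eq_zero_right hsum.symm
  have htr : (X * X).trace = (M * M).trace := by
    have hXX : X * X = B⁻¹ * (M * M) * B := by
      simp only [hXdef, mul_assoc, mul_nonsing_inv_cancel_left _ _ hdet]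
    rw [hXX, trace_mul_comm, ← mul_assoc, mul_nonsing_inv _ hdet, one_mul]
  have hX0 : X = 0 := eq_zero_of_transpose_eq_neg_of_trace_mul_self_nonneg hX
    (htr ▸ (trace_mul_self_eq_sum_diag_sq hE hM).symm ▸ by positivity)
  rw [hMX, hX0, mul_zero, zero_mul]

def lyapunovMap (S : Matrix n n ℝ) : Matrix n n ℝ →ₗ[ℝ] Matrix n n ℝ where
  toFun M := M * S + S * Mᵀ
  map_add' M N := by simp only [add_mul, transpose_add, mul_add]; abel
  map_smul' c M := by simp [smul_add]

theorem exists_inSupp_lyapunov_eq_zero [DecidableEq n] {E : Set (n × n)}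
    (hsimple : IsSimpleDigraph E) (htot : ∀ i j, (i, j) ∈ E ∨ (j, i) ∈ E)
    {S C : Matrix n n ℝ} (hS : S.PosDef) (hC : C.IsSymm) :
    ∃ M, InSupp E M ∧ M * S + S * Mᵀ + C = 0 := by
  have hsymm (M : Matrix n n ℝ) : (lyapunovMap S M).IsSymm := by
    have hS' : Sᵀ = S := (isHermitian_iff_isSymm.mp hS.isHermitian).eq
    simp only [IsSymm, lyapunovMap, LinearMap.coe_mk, AddHom.coe_mk, transpose_add,
      transpose_mul, transpose_transpose, hS']
    exact add_comm _ _
  -- A symmetric matrix is determined by its entries on `E`, so `ℝ^E` can stand in for the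
  -- symmetric matrices as codomain and `Φ` becomes an endomorphism.
  let Φ := restrictSupp E ∘ₗ lyapunovMap S ∘ₗ (supportedOn E).subtype
  have hinj : Function.Injective Φ := by
    rw [← LinearMap.ker_eq_bot, LinearMap.ker_eq_bot']
    intro M hM
    exact Subtype.ext (eq_zero_of_mul_add_mul_transpose_eq_zero hsimple M.2 hS
      (eq_zero_of_isSymm_of_restrictSupp_eq_zero htot (hsymm M) hM))
  obtain ⟨M, hM⟩ := LinearMap.injective_iff_surjective.mp hinj (restrictSupp E (-C))
  refine ⟨M, M.2, eq_zero_of_isSymm_of_restrictSupp_eq_zero htot ((hsymm M).add hC) ?_⟩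
  change restrictSupp E (lyapunovMap S M + C) = 0
  rw [map_add, show restrictSupp E (lyapunovMap S M) = _ from hM, map_neg, neg_add_cancel]

end Matrix

/-- for a complete simple graph (with all self-loops, and for every
pair of distinct nodes exactly one of the two possible edges), the model equals the
whole positive definite cone. -/
theorem complete_simple_model_eq_posdef {p : ℕ}
    (E : Set (Fin p × Fin p)) (hloops : ∀ i : Fin p, (i, i) ∈ E)
    (hcomp : ∀ i j : Fin p, i ≠ j → Xor' ((i, j) ∈ E) ((j, i) ∈ E))
    (C : Matrix (Fin p) (Fin p) ℝ) (hC : C.PosDef) :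
    LyapModel E C = {S : Matrix (Fin p) (Fin p) ℝ | S.PosDef} := by
  have hsimple : IsSimpleDigraph E := fun i j hij hE hE' =>
    (hcomp i j hij).elim (fun h => h.2 hE') (fun h => h.2 hE)
  have htot : ∀ i j, (i, j) ∈ E ∨ (j, i) ∈ E := fun i j => by
    rcases eq_or_ne i j with rfl | hij
    · exact .inl (hloops i)
    · exact (hcomp i j hij).imp And.left And.left
  ext S
  exact ⟨And.left, fun hS => ⟨hS, exists_inSupp_lyapunov_eq_zero hsimple htot hS
    (isHermitian_iff_isSymm.mp hC.isHermitian)⟩⟩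
end
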